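/- Divergence-preserving branching bisimilarity is a congruence for the parallel composition operator of the process calculus: if E is a recursive specification and p1, p2, q1, q2 are process expressions whose names are all defined in E such that T_E(p1) ≈Δb T_E(p2) and T_E(q1) ≈Δb T_E(q2), then T_E([p1 ∥ q1]_{C′}) ≈Δb T_E([p2 ∥ q2]_{C′}) for every C′ ⊆ C. -/

import Mathlib

namespace RTMPaper

/-! ## Labelled transition systems

An `A`-labelled transition system; transition labels are drawn from `Option A`,
where `none` plays the role of the unobservable action τ. -/

structure LTS (A : Type) where
  State : Type
  tr : State → Option A → State → Prop
  init : State
  final : Set State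

namespace LTS

variable {A : Type}

/-- A τ-step. -/
def tauStep (T : LTS A) (s t : T.State) : Prop := T.tr s none t

/-- `⇒` : the reflexive–transitive closure of τ-steps. -/
def tauReach (T : LTS A) : T.State → T.State → Prop :=
  Relation.ReflTransGen T.tauStep

/-- `s —(a)→ t` : either `s —a→ t`, or `a = τ` and `s = t`. -/
def optStep (T : LTS A) (s : T.State) (a : Option A) (t : T.State) : Prop :=
  T.tr s a t ∨ (a = none ∧ s = t)

/-- The set of outgoing transitions of a state. -/
def out (T : LTS A) (s : T.State) : Set (Option A × T.State) :=
  {p | T.tr s p.1 p.2}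

def FinitelyBranching (T : LTS A) : Prop := ∀ s, (T.out s).Finite

/-- The branching degree of `T` is bounded by `B`. -/
def BranchingDegreeBoundedBy (T : LTS A) (B : ℕ) : Prop :=
  ∀ s, (T.out s).Finite ∧ (T.out s).ncard ≤ B

def BoundedlyBranching (T : LTS A) : Prop := ∃ B, T.BranchingDegreeBoundedBy B

/-- A deterministic transition system. -/
def Deterministic (T : LTS A) : Prop :=
  (∀ s a t₁ t₂, T.tr s a t₁ → T.tr s a t₂ → t₁ = t₂) ∧
  (∀ s t, T.tr s none t → ∀ a u, T.tr s a u → a = none)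

/-- Relabelling of an LTS along a map of action alphabets (τ is mapped to τ). -/
def relabel {A' : Type} (f : A → A') (T : LTS A) : LTS A' where
  State := T.State
  tr s a t := ∃ a₀ : Option A, T.tr s a₀ t ∧ a = Option.map f a₀
  init := T.init
  final := T.final

end LTS

/-! ## (Divergence-preserving) branching bisimilarity -/

structure IsBranchingBisimulation {A : Type} (T₁ T₂ : LTS A)
    (R : T₁.State → T₂.State → Prop) : Prop where
  fwd : ∀ s₁ s₂ a s₁', R s₁ s₂ → T₁.tr s₁ a s₁' →
    ∃ s₂'' s₂', T₂.tauReach s₂ s₂'' ∧ T₂.optStep s₂'' a s₂' ∧ R s₁ s₂'' ∧ R s₁' s₂'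
  bwd : ∀ s₁ s₂ a s₂', R s₁ s₂ → T₂.tr s₂ a s₂' →
    ∃ s₁'' s₁', T₁.tauReach s₁ s₁'' ∧ T₁.optStep s₁'' a s₁' ∧ R s₁'' s₂ ∧ R s₁' s₂'
  finFwd : ∀ s₁ s₂, R s₁ s₂ → s₁ ∈ T₁.final →
    ∃ s₂', T₂.tauReach s₂ s₂' ∧ R s₁ s₂' ∧ s₂' ∈ T₂.final
  finBwd : ∀ s₁ s₂, R s₁ s₂ → s₂ ∈ T₂.final →
    ∃ s₁', T₁.tauReach s₁ s₁' ∧ R s₁' s₂ ∧ s₁' ∈ T₁.final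

/-- The divergence-preservation conditions on a branching bisimulation. -/
def DivergencePreserving {A : Type} (T₁ T₂ : LTS A)
    (R : T₁.State → T₂.State → Prop) : Prop :=
  (∀ (s₂ : T₂.State) (f : ℕ → T₁.State),
      (∀ i, T₁.tauStep (f i) (f (i + 1))) → (∀ i, R (f i) s₂) →
      ∃ s₂', Relation.TransGen T₂.tauStep s₂ s₂' ∧ ∃ i, R (f i) s₂') ∧
  (∀ (s₁ : T₁.State) (f : ℕ → T₂.State),
      (∀ i, T₂.tauStep (f i) (f (i + 1))) → (∀ i, R s₁ (f i)) →
      ∃ s₁', Relation.TransGen T₁.tauStep s₁ s₁' ∧ ∃ i, R s₁' (f i))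

/-- `T₁ ≈b T₂` : branching bisimilarity. -/
def BranchingBisimilar {A : Type} (T₁ T₂ : LTS A) : Prop :=
  ∃ R, IsBranchingBisimulation T₁ T₂ R ∧ R T₁.init T₂.init

/-- `T₁ ≈Δb T₂` : divergence-preserving branching bisimilarity. -/
def DPBranchingBisimilar {A : Type} (T₁ T₂ : LTS A) : Prop :=
  ∃ R, IsBranchingBisimulation T₁ T₂ R ∧ DivergencePreserving T₁ T₂ R ∧
    R T₁.init T₂.init

/-! ## Effective and computable transition systems -/

/-- A set of natural numbers is recursively enumerable. -/
def REset (X : Set ℕ) : Prop :=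
  ∃ f : ℕ →. Unit, Partrec f ∧ ∀ n, (f n).Dom ↔ n ∈ X

/-- A (finitely branching) LTS is computable if, with respect to some injective
codings of its labels and states into ℕ, the functions `out` and `fin` are
recursive. -/
def LTS.IsComputable {A : Type} (T : LTS A) : Prop :=
  ∃ hfb : ∀ s, (T.out s).Finite,
    ∃ (cL : Option A → ℕ) (cS : T.State → ℕ),
      Function.Injective cL ∧ Function.Injective cS ∧
      (∃ fo : ℕ → ℕ, Computable fo ∧ ∀ s,
        fo (cS s) =
          Encodable.encode
            (((hfb s).toFinset).image fun p => Nat.pair (cL p.1) (cS p.2))) ∧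
      (∃ ff : ℕ → ℕ, Computable ff ∧ ∀ s,
        (s ∈ T.final → ff (cS s) = 1) ∧ (s ∉ T.final → ff (cS s) = 0))

/-- A (finitely branching) LTS is effective if, with respect to some injective
codings of its labels and states into ℕ, its transition relation and its set of
final states are recursively enumerable. -/
def LTS.IsEffective {A : Type} (T : LTS A) : Prop :=
  T.FinitelyBranching ∧
  ∃ (cL : Option A → ℕ) (cS : T.State → ℕ),
    Function.Injective cL ∧ Function.Injective cS ∧
    REset {n | ∃ s a t, T.tr s a t ∧ n = Nat.pair (cS s) (Nat.pair (cL a) (cS t))} ∧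
    REset {n | ∃ s ∈ T.final, n = cS s}

/-! ## Reactive Turing machines -/

inductive Move : Type
  | L | R
deriving DecidableEq

instance : Fintype Move where
  elems := {Move.L, Move.R}
  complete := by intro x; cases x <;> simp

/-- A tape instance: the content left of the head (nearest symbol first), the
symbol under the head, and the content right of the head (nearest symbol
first).  Tape symbols are `Option D`, with `none` the blank symbol □. -/
structure Tape (D : Type) where
  left : List (Option D)
  head : Option D
  right : List (Option D)

def Tape.empty (D : Type) : Tape D := ⟨[], none, []⟩

/-- Write `e` at the head position and move the head in direction `m`. -/
def Tape.writeMove {D : Type} (t : Tape D) (e : Option D) : Move → Tape D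
  | .L =>
    match t.left with
    | [] => ⟨[], none, e :: t.right⟩
    | x :: l => ⟨l, x, e :: t.right⟩
  | .R =>
    match t.right with
    | [] => ⟨e :: t.left, none, []⟩
    | x :: r => ⟨e :: t.left, x, r⟩

/-- A reactive Turing machine with action symbols `A` (labels `Option A`,
`none` being τ) and data symbols `D` (tape symbols `Option D`, `none` being
the blank symbol). -/
structure RTM (A D : Type) where
  Q : Type
  [instQ : Fintype Q]
  trans : Q → Option D → Option A → Option D → Move → Q → Prop
  init : Q
  final : Set Q

attribute [instance] RTM.instQ

/-- The transition system `T(M)` associated with an RTM `M`. -/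
def RTM.lts {A D : Type} (M : RTM A D) : LTS A where
  State := M.Q × Tape D
  tr c a c' := ∃ e m, M.trans c.1 c.2.head a e m c'.1 ∧ c'.2 = c.2.writeMove e m
  init := (M.init, Tape.empty D)
  final := {c | c.1 ∈ M.final}

def RTM.Deterministic {A D : Type} (M : RTM A D) : Prop :=
  (∀ s d a e₁ m₁ t₁ e₂ m₂ t₂, M.trans s d a e₁ m₁ t₁ → M.trans s d a e₂ m₂ t₂ →
      e₁ = e₂ ∧ m₁ = m₂ ∧ t₁ = t₂) ∧
  (∀ s d e₁ m₁ t₁, M.trans s d none e₁ m₁ t₁ →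
      ∀ a e₂ m₂ t₂, M.trans s d a e₂ m₂ t₂ → a = none)

/-! ## Actions over channels, and parallel composition -/

/-- Actions over a set `C` of channels with communicated values in `V`,
together with further (base) actions from `B`:  `recv c v` is `c?v`,
`send c v` is `c!v`. -/
inductive CAct (C V B : Type) : Type
  | recv : C → V → CAct C V B
  | send : C → V → CAct C V B
  | base : B → CAct C V B
deriving DecidableEq

/-- The (possibly silent) action `a` is a communication action on one of the
channels in `C'`. -/
def IsComm {C V B : Type} (C' : Set C) : Option (CAct C V B) → Prop
  | some (.recv c _) => c ∈ C'
  | some (.send c _) => c ∈ C'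
  | _ => False

/-- Parallel composition `[T₁ ∥ T₂]_{C'}` of transition systems, enforcing
communication on the channels in `C'`. -/
def parLTS {C V B : Type} (C' : Set C) (T₁ T₂ : LTS (CAct C V B)) :
    LTS (CAct C V B) where
  State := T₁.State × T₂.State
  init := (T₁.init, T₂.init)
  final := {p | p.1 ∈ T₁.final ∧ p.2 ∈ T₂.final}
  tr p a p' :=
    ¬ IsComm C' a ∧
    ((T₁.tr p.1 a p'.1 ∧ p.2 = p'.2) ∨
     (T₂.tr p.2 a p'.2 ∧ p.1 = p'.1) ∨
     (a = none ∧ ∃ c ∈ C', ∃ d : V,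
        (T₁.tr p.1 (some (.send c d)) p'.1 ∧ T₂.tr p.2 (some (.recv c d)) p'.2) ∨
        (T₁.tr p.1 (some (.recv c d)) p'.1 ∧ T₂.tr p.2 (some (.send c d)) p'.2)))

/-- The behaviour of `sender(M)`: output the symbols of `w` one by one along
channel `cu`, then halt in a final state. -/
def outputLTS {C V B : Type} (cu : C) (w : List V) : LTS (CAct C V B) where
  State := List V
  tr s a t := ∃ d, s = d :: t ∧ a = some (.send cu d)
  init := w
  final := {([] : List V)}

/-- A concrete (syntactic, Gödel-numberable) presentation of a reactive Turing
machine: states are `Fin (n+1)`, and the transition relation is a finite set of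
tuples. -/
structure RTMc (A D : Type) where
  n : ℕ
  trans : Finset (Fin (n + 1) × Option D × Option A × Option D × Move × Fin (n + 1))
  init : Fin (n + 1)
  final : Finset (Fin (n + 1))

def RTMc.toRTM {A D : Type} (M : RTMc A D) : RTM A D where
  Q := Fin (M.n + 1)
  trans s d a e m t := (s, d, a, e, m, t) ∈ M.trans
  init := M.init
  final := (↑M.final : Set (Fin (M.n + 1)))

end RTMPaper

namespace RTMPaper

/-! ## A process calculus (TCP_τ without sequential composition) -/

/-- Process expressions: deadlock `0`, skip `1`, action prefix, alternative
composition, parallel composition (enforcing communication on a set of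
channels), and names. -/
inductive PExp (C V B N : Type) : Type
  | dl : PExp C V B N
  | emp : PExp C V B N
  | pref : Option (CAct C V B) → PExp C V B N → PExp C V B N
  | alt : PExp C V B N → PExp C V B N → PExp C V B N
  | par : Set C → PExp C V B N → PExp C V B N → PExp C V B N
  | name : N → PExp C V B N

namespace PExp

def names {C V B N : Type} : PExp C V B N → Set N
  | .dl => ∅
  | .emp => ∅
  | .pref _ p => p.names
  | .alt p q => p.names ∪ q.names
  | .par _ p q => p.names ∪ q.names
  | .name n => {n}

def mapNames {C V B N N' : Type} (f : N → N') : PExp C V B N → PExp C V B N'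
  | .dl => .dl
  | .emp => .emp
  | .pref a p => .pref a (p.mapNames f)
  | .alt p q => .alt (p.mapNames f) (q.mapNames f)
  | .par C' p q => .par C' (p.mapNames f) (q.mapNames f)
  | .name n => .name (f n)

end PExp

/-- A recursive specification over the names `N` is a partial map from names to
process expressions (the defining equations). -/
def SpecWF {C V B N : Type} (E : N → Option (PExp C V B N)) : Prop :=
  ∀ n p, E n = some p → ∀ m ∈ PExp.names p, (E m).isSome

/-- All names occurring in `p` have a defining equation in `E`. -/
def DefinedIn {C V B N : Type} (E : N → Option (PExp C V B N))
    (p : PExp C V B N) : Prop :=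
  ∀ m ∈ PExp.names p, (E m).isSome

/-- The termination predicate `↓` of the structural operational semantics. -/
inductive Term {C V B N : Type} (E : N → Option (PExp C V B N)) :
    PExp C V B N → Prop
  | emp : Term E .emp
  | altL {p q} : Term E p → Term E (.alt p q)
  | altR {p q} : Term E q → Term E (.alt p q)
  | par {C' p q} : Term E p → Term E q → Term E (.par C' p q)
  | name {n p} : E n = some p → Term E p → Term E (.name n)

/-- The transition relation of the structural operational semantics. -/
inductive Step {C V B N : Type} (E : N → Option (PExp C V B N)) :
    PExp C V B N → Option (CAct C V B) → PExp C V B N → Prop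
  | pref {a p} : Step E (.pref a p) a p
  | altL {p q a p'} : Step E p a p' → Step E (.alt p q) a p'
  | altR {p q a q'} : Step E q a q' → Step E (.alt p q) a q'
  | parL {C' p q a p'} : Step E p a p' → ¬ IsComm C' a →
      Step E (.par C' p q) a (.par C' p' q)
  | parR {C' p q a q'} : Step E q a q' → ¬ IsComm C' a →
      Step E (.par C' p q) a (.par C' p q')
  | syncSR {C' : Set C} {p q p' q' c d} : c ∈ C' →
      Step E p (some (.send c d)) p' → Step E q (some (.recv c d)) q' →
      Step E (.par C' p q) none (.par C' p' q')
  | syncRS {C' : Set C} {p q p' q' c d} : c ∈ C' →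
      Step E p (some (.recv c d)) p' → Step E q (some (.send c d)) q' →
      Step E (.par C' p q) none (.par C' p' q')
  | name {n p a p'} : E n = some p → Step E p a p' → Step E (.name n) a p'

/-- The process expressions reachable from `p` under the semantics of `E`. -/
def Reach {C V B N : Type} (E : N → Option (PExp C V B N))
    (p : PExp C V B N) : Set (PExp C V B N) :=
  {q | Relation.ReflTransGen (fun x y => ∃ a, Step E x a y) p q}

/-- The transition system `T_E(p)` associated with the process expression `p`
and the recursive specification `E`. -/
def pLTS {C V B N : Type} (E : N → Option (PExp C V B N))
    (p : PExp C V B N) : LTS (CAct C V B) where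
  State := {q // q ∈ Reach E p}
  tr s a t := Step E s.1 a t.1
  init := ⟨p, Relation.ReflTransGen.refl⟩
  final := {s | Term E s.1}

/-- A deterministic internal computation from `s` to `s'` with respect to a
transition relation `tr`. -/
def DetInternalComp {S A : Type} (tr : S → Option A → S → Prop)
    (s s' : S) : Prop :=
  ∃ (n : ℕ) (f : ℕ → S), f 0 = s ∧ f n = s' ∧
    (∀ i < n, tr (f i) none (f (i + 1))) ∧
    (∀ i < n, ∀ a u, tr (f i) a u → a = none ∧ u = f (i + 1))

/-! ### Finite sums of process expressions -/

def bigAlt {C V B N : Type} (l : List (PExp C V B N)) : PExp C V B N :=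
  l.foldr PExp.alt PExp.dl

/-- `Σ_{x ∈ l} f x`. -/
def sumList {C V B N ι : Type} (l : List ι) (f : ι → PExp C V B N) :
    PExp C V B N :=
  bigAlt (l.map f)

/-- The list of all elements of a finite type. -/
noncomputable def allOf (ι : Type) [Fintype ι] : List ι := Finset.univ.toList

/-- The disjoint union of two recursive specifications. -/
def combineSpec {C V B N₁ N₂ : Type}
    (E₁ : N₁ → Option (PExp C V B N₁)) (E₂ : N₂ → Option (PExp C V B N₂)) :
    N₁ ⊕ N₂ → Option (PExp C V B (N₁ ⊕ N₂))
  | .inl n => (E₁ n).map (PExp.mapNames Sum.inl)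
  | .inr n => (E₂ n).map (PExp.mapNames Sum.inr)

/-! ### Queue specifications -/

/-- The infinite specification `E∞Q` of a FIFO queue over the alphabet `al`
with input channel `ci` and output channel `co`; the name of a state of the
queue is its contents (a string, insertion at the left, removal at the
right). -/
def infQueueSpec (C B V : Type) (al : List V) (ci co : C) :
    List V → Option (PExp C V B (List V)) := fun l =>
  some <|
    match l.getLast? with
    | none =>
        .alt (sumList al fun d => .pref (some (.recv ci d)) (.name [d])) .emp
    | some d =>
        .alt (.alt (.pref (some (.send co d)) (.name l.dropLast))
          (sumList al fun e => .pref (some (.recv ci e)) (.name (e :: l)))) .emp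

/-- The finite Bergstra–Klop queue specification `EQ` (with added `1`-summands):
for channels `(j,k,p)`,
`Q^{jk}_p ≝ Σ_d j?d.[ Q^{jp}_k ∥ (1 + k!d.Q^{pk}_j) ]_{{p}} + 1`. -/
def bkQueueSpec (C B V : Type) (al : List V) :
    C × C × C → Option (PExp C V B (C × C × C)) := fun jkp =>
  some <| .alt
    (sumList al fun d => .pref (some (.recv jkp.1 d))
      (.par {jkp.2.2} (.name (jkp.1, jkp.2.2, jkp.2.1))
        (.alt .emp (.pref (some (.send jkp.2.1 d)) (.name (jkp.2.2, jkp.2.1, jkp.1))))))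
    .emp

/-! ### Tape specifications -/

/-- Symbols communicated in the tape/queue specifications: tape symbols
(`dat d` for `d ∈ D□`), the fresh symbols `⊥` and `$`, and the move
instructions `L` and `R`. -/
inductive Sym (D : Type) : Type
  | dat : Option D → Sym D
  | bot : Sym D
  | dollar : Sym D
  | mvL : Sym D
  | mvR : Sym D
deriving DecidableEq

instance {D : Type} [Fintype D] [DecidableEq D] : Fintype (Sym D) where
  elems := ((Finset.univ : Finset (Option D)).image Sym.dat) ∪
    {Sym.bot, Sym.dollar, Sym.mvL, Sym.mvR}
  complete := by intro x; cases x <;> simp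

/-- The queue alphabet `D□ ∪ {⊥, $}`. -/
noncomputable def qAlphList (D : Type) [Fintype D] [DecidableEq D] : List (Sym D) :=
  ((Finset.univ : Finset (Sym D)).filter fun v => v ≠ Sym.mvL ∧ v ≠ Sym.mvR).toList

def dmap {D : Type} (l : List (Option D)) : List (Sym D) := l.map Sym.dat

def movSym {D : Type} : Move → Sym D
  | .L => .mvL
  | .R => .mvR

/-- Names of the finite tape-controller specification `ET`. -/
inductive TName (D : Type) : Type
  | H : Option D → TName D
  | HL : Option D → TName D
  | HR : Option D → TName D
  | Back : TName D
  | Fwd : Option D → TName D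
  | FwdBot : TName D

/-- The finite tape-controller specification `ET`, with read channel `cr`,
write channel `cw`, move channel `cm`, and a queue interface on channels
`ci` (insert) and `co` (remove). -/
noncomputable def tapeCtrlSpec (C D B : Type) [Fintype D] (ci co cr cw cm : C) :
    TName D → Option (PExp C (Sym D) B (TName D))
  | .H d => some <| .alt (.alt (.alt (.alt
      (.pref (some (.send cr (.dat d))) (.name (.H d)))
      (sumList (allOf (Option D)) fun e =>
        .pref (some (.recv cw (.dat e))) (.name (.H e))))
      (.pref (some (.recv cm .mvL)) (.name (.HL d))))
      (.pref (some (.recv cm .mvR)) (.name (.HR d))))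
      .emp
  | .HL d => some <| .pref (some (.send ci (.dat d)))
      (.alt (sumList (allOf (Option D)) fun e =>
          .pref (some (.recv co (.dat e))) (.name (.H e)))
        (.pref (some (.recv co .bot))
          (.pref (some (.send ci .dollar))
            (.pref (some (.send ci .bot)) (.name .Back)))))
  | .Back => some <| .alt
      (sumList (allOf (Option D)) fun d =>
        .pref (some (.recv co (.dat d)))
          (.pref (some (.send ci (.dat d))) (.name .Back)))
      (.pref (some (.recv co .dollar)) (.name (.H none)))
  | .HR d => some <| .pref (some (.send ci .dollar))
      (.pref (some (.send ci (.dat d)))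
        (.alt (sumList (allOf (Option D)) fun e =>
            .pref (some (.recv co (.dat e))) (.name (.Fwd e)))
          (.pref (some (.recv co .bot)) (.name .FwdBot))))
  | .Fwd d => some <| .alt (.alt
      (sumList (allOf (Option D)) fun e =>
        .pref (some (.recv co (.dat e)))
          (.pref (some (.send ci (.dat d))) (.name (.Fwd e))))
      (.pref (some (.recv co .bot))
        (.pref (some (.send ci (.dat d))) (.name .FwdBot))))
      (.pref (some (.recv co .dollar)) (.name (.H d)))
  | .FwdBot => some <| .alt
      (sumList (allOf (Option D)) fun e =>
        .pref (some (.recv co (.dat e)))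
          (.pref (some (.send ci .bot)) (.name (.Fwd e))))
      (.pref (some (.recv co .dollar))
        (.pref (some (.send ci .bot)) (.name (.H none))))

/-- The infinite tape specification `E∞T`: one name for every tape instance,
with read channel `cr`, write channel `cw` and move channel `cm`. -/
noncomputable def infTapeSpec (C B D : Type) [Fintype D] (cr cw cm : C) :
    Tape D → Option (PExp C (Sym D) B (Tape D)) := fun t =>
  some <| .alt (.alt (.alt (.alt
    (.pref (some (.send cr (.dat t.head))) (.name t))
    (sumList (allOf (Option D)) fun e =>
      .pref (some (.recv cw (.dat e))) (.name ⟨t.left, e, t.right⟩)))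
    (.pref (some (.recv cm .mvL)) (.name (t.writeMove t.head .L))))
    (.pref (some (.recv cm .mvR)) (.name (t.writeMove t.head .R))))
    .emp

/-- The finite-control specification `Efc` of an RTM `M`:
`C_{s,d} ≝ Σ_{(s,d,a,e,Mv,t) ∈ →} a.w!e.m!Mv.Σ_{f∈D□} r?f.C_{t,f}`,
with an additional summand `1` iff `s` is a final state of `M`. -/
noncomputable def fcSpec {C D B : Type} [Fintype D] [Fintype B]
    (M : RTM B D) (cr cw cm : C) :
    M.Q × Option D → Option (PExp C (Sym D) B (M.Q × Option D)) := fun sd =>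
  let base : PExp C (Sym D) B (M.Q × Option D) :=
    bigAlt ((((Set.toFinite {x : Option B × Option D × Move × M.Q |
        M.trans sd.1 sd.2 x.1 x.2.1 x.2.2.1 x.2.2.2}).toFinset).toList).map fun x =>
      .pref (Option.map CAct.base x.1)
        (.pref (some (.send cw (.dat x.2.1)))
          (.pref (some (.send cm (movSym x.2.2.1)))
            (sumList (allOf (Option D)) fun f =>
              .pref (some (.recv cr (.dat f))) (.name (x.2.2.2, f))))))
  haveI := Classical.propDecidable (sd.1 ∈ M.final)
  some (if sd.1 ∈ M.final then .alt base .emp else base)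

end RTMPaper

namespace RTMPaper

/-! Pair a divergence-preserving branching bisimulation between the left components with one
between the right components. A step of one component is answered by the answer in that
component. A synchronisation is answered by letting both components of the other side do their
τ-prefixes and then synchronise; since the synchronising actions are visible, this answer ends
in a proper τ-step. An infinite τ-run of the composition therefore either contains a
synchronisation, and its answer is the required τ⁺-path, or makes infinitely many τ-steps in one
component, whose divergence is then preserved.

Every state reachable from `[p ∥ q]` is a parallel composition, so splitting it into its two
components is a functional bisimulation from `T_E([p ∥ q])` onto the composition of `T_E(p)`
and `T_E(q)`. Divergence-preserving branching bisimilarity can be pulled back along such maps. -/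

namespace LTS

variable {A : Type}

lemma optStep_some {T : LTS A} {s t : T.State} {a : A} (h : T.optStep s (some a) t) :
    T.tr s (some a) t :=
  h.resolve_right fun h => Option.some_ne_none a h.1

structure IsFunctionalBisimulation (T T' : LTS A) (φ : T.State → T'.State) : Prop where
  map_tr : ∀ s a t, T.tr s a t → T'.tr (φ s) a (φ t)
  lift_tr : ∀ s a t', T'.tr (φ s) a t' → ∃ t, T.tr s a t ∧ φ t = t'
  mem_final_iff : ∀ s, φ s ∈ T'.final ↔ s ∈ T.final
  map_init : φ T.init = T'.init

namespace IsFunctionalBisimulation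

variable {T T' : LTS A} {φ : T.State → T'.State}

lemma lift_optStep (hφ : IsFunctionalBisimulation T T' φ) {s : T.State} {a : Option A}
    {t' : T'.State} (h : T'.optStep (φ s) a t') : ∃ t, T.optStep s a t ∧ φ t = t' := by
  rcases h with h | ⟨rfl, rfl⟩
  · obtain ⟨t, ht, rfl⟩ := hφ.lift_tr s a t' h
    exact ⟨t, .inl ht, rfl⟩
  · exact ⟨s, .inr ⟨rfl, rfl⟩, rfl⟩

lemma lift_tauReach (hφ : IsFunctionalBisimulation T T' φ) {s : T.State} {t' : T'.State}
    (h : T'.tauReach (φ s) t') : ∃ t, T.tauReach s t ∧ φ t = t' := by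
  induction h with
  | refl => exact ⟨s, .refl, rfl⟩
  | tail _ hstep ih =>
    obtain ⟨t, ht, rfl⟩ := ih
    obtain ⟨u, hu, rfl⟩ := hφ.lift_tr t none _ hstep
    exact ⟨u, ht.tail hu, rfl⟩

lemma lift_transGen (hφ : IsFunctionalBisimulation T T' φ) {s : T.State} {t' : T'.State}
    (h : Relation.TransGen T'.tauStep (φ s) t') :
    ∃ t, Relation.TransGen T.tauStep s t ∧ φ t = t' := by
  obtain ⟨u', hsu, hut⟩ := Relation.TransGen.tail'_iff.mp h
  obtain ⟨u, hu, rfl⟩ := hφ.lift_tauReach hsu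
  obtain ⟨t, ht, rfl⟩ := hφ.lift_tr u none t' hut
  exact ⟨t, .tail' hu ht, rfl⟩

end IsFunctionalBisimulation

end LTS

open LTS

structure IsDPBranchingSim {A : Type} (T₁ T₂ : LTS A) (R : T₁.State → T₂.State → Prop) :
    Prop where
  step : ∀ s₁ s₂ a s₁', R s₁ s₂ → T₁.tr s₁ a s₁' →
    ∃ s₂'' s₂', T₂.tauReach s₂ s₂'' ∧ T₂.optStep s₂'' a s₂' ∧ R s₁ s₂'' ∧ R s₁' s₂'
  final : ∀ s₁ s₂, R s₁ s₂ → s₁ ∈ T₁.final →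
    ∃ s₂', T₂.tauReach s₂ s₂' ∧ R s₁ s₂' ∧ s₂' ∈ T₂.final
  div : ∀ (s₂ : T₂.State) (f : ℕ → T₁.State),
    (∀ i, T₁.tauStep (f i) (f (i + 1))) → (∀ i, R (f i) s₂) →
    ∃ s₂', Relation.TransGen T₂.tauStep s₂ s₂' ∧ ∃ i, R (f i) s₂'

theorem dpBranchingBisimilar_iff {A : Type} {T₁ T₂ : LTS A} :
    DPBranchingBisimilar T₁ T₂ ↔
      ∃ R, IsDPBranchingSim T₁ T₂ R ∧ IsDPBranchingSim T₂ T₁ (flip R) ∧ R T₁.init T₂.init := by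
  constructor
  · rintro ⟨R, ⟨fwd, bwd, finFwd, finBwd⟩, ⟨div₁, div₂⟩, hinit⟩
    exact ⟨R, ⟨fwd, finFwd, div₁⟩,
      ⟨fun s₂ s₁ a s₂' h hs => bwd s₁ s₂ a s₂' h hs, fun s₂ s₁ h hf => finBwd s₁ s₂ h hf, div₂⟩,
      hinit⟩
  · rintro ⟨R, h₁, h₂, hinit⟩
    exact ⟨R, ⟨h₁.step, fun s₁ s₂ a s₂' h hs => h₂.step s₂ s₁ a s₂' h hs, h₁.final,
      fun s₁ s₂ h hf => h₂.final s₂ s₁ h hf⟩, ⟨h₁.div, h₂.div⟩, hinit⟩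

lemma IsDPBranchingSim.comap {A : Type} {T₁ T₂ T₁' T₂' : LTS A}
    {R : T₁'.State → T₂'.State → Prop} (hR : IsDPBranchingSim T₁' T₂' R)
    {φ₁ : T₁.State → T₁'.State} {φ₂ : T₂.State → T₂'.State}
    (hφ₁ : IsFunctionalBisimulation T₁ T₁' φ₁) (hφ₂ : IsFunctionalBisimulation T₂ T₂' φ₂) :
    IsDPBranchingSim T₁ T₂ fun s₁ s₂ => R (φ₁ s₁) (φ₂ s₂) where
  step s₁ s₂ a s₁' h hs := by
    obtain ⟨t'', t', hreach', hopt', h'', h'⟩ := hR.step _ _ a _ h (hφ₁.map_tr _ _ _ hs)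
    obtain ⟨s₂'', hreach, rfl⟩ := hφ₂.lift_tauReach hreach'
    obtain ⟨s₂', hopt, rfl⟩ := hφ₂.lift_optStep hopt'
    exact ⟨s₂'', s₂', hreach, hopt, h'', h'⟩
  final s₁ s₂ h hf := by
    obtain ⟨t', hreach', h', hf'⟩ := hR.final _ _ h ((hφ₁.mem_final_iff s₁).mpr hf)
    obtain ⟨s₂', hreach, rfl⟩ := hφ₂.lift_tauReach hreach'
    exact ⟨s₂', hreach, h', (hφ₂.mem_final_iff s₂').mp hf'⟩
  div s₂ f hf h := by
    obtain ⟨t', htrans', i, h'⟩ :=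
      hR.div (φ₂ s₂) (φ₁ ∘ f) (fun i => hφ₁.map_tr _ _ _ (hf i)) h
    obtain ⟨s₂', htrans, rfl⟩ := hφ₂.lift_transGen htrans'
    exact ⟨s₂', htrans, i, h'⟩

theorem DPBranchingBisimilar.comap {A : Type} {T₁ T₂ T₁' T₂' : LTS A}
    (h : DPBranchingBisimilar T₁' T₂') {φ₁ : T₁.State → T₁'.State} {φ₂ : T₂.State → T₂'.State}
    (hφ₁ : IsFunctionalBisimulation T₁ T₁' φ₁) (hφ₂ : IsFunctionalBisimulation T₂ T₂' φ₂) :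
    DPBranchingBisimilar T₁ T₂ := by
  obtain ⟨R, h₁, h₂, hinit⟩ := dpBranchingBisimilar_iff.mp h
  refine dpBranchingBisimilar_iff.mpr ⟨_, h₁.comap hφ₁ hφ₂, h₂.comap hφ₂ hφ₁, ?_⟩
  simpa only [hφ₁.map_init, hφ₂.map_init] using hinit

theorem exists_chain_of_infinite_steps {S : Type*} {r : S → S → Prop} {g : ℕ → S}
    (hg : ∀ i, r (g i) (g (i + 1)) ∨ g i = g (i + 1))
    (hinf : {i | r (g i) (g (i + 1))}.Infinite) :
    ∃ φ : ℕ → ℕ, ∀ k, r (g (φ k)) (g (φ (k + 1))) := by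
  set P := fun i => r (g i) (g (i + 1))
  -- `Nat.nth P` enumerates the proper steps; `g` is constant between two consecutive ones.
  refine ⟨Nat.nth P, fun k => ?_⟩
  have hconst : ∀ m, Nat.nth P k + 1 ≤ m → m ≤ Nat.nth P (k + 1) →
      g (Nat.nth P k + 1) = g m := by
    intro m hm
    induction m, hm using Nat.le_induction with
    | base => exact fun _ => rfl
    | succ m hm ih =>
      intro hm'
      have hnot : ¬ P m := fun h => by
        have := Nat.le_nth_of_lt_nth_succ (Nat.lt_of_succ_le hm') h
        omega
      exact (ih (Nat.le_of_succ_le hm')).trans ((hg m).resolve_left hnot)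
  have hlt : Nat.nth P k < Nat.nth P (k + 1) := (Nat.nth_lt_nth hinf).mpr k.lt_succ_self
  rw [← hconst _ hlt le_rfl]
  exact Nat.nth_mem_of_infinite hinf k

lemma IsDPBranchingSim.div_of_stutter {A : Type} {T₁ T₂ : LTS A}
    {R : T₁.State → T₂.State → Prop} (hR : IsDPBranchingSim T₁ T₂ R) {s₂ : T₂.State}
    {g : ℕ → T₁.State} (hg : ∀ i, T₁.tauStep (g i) (g (i + 1)) ∨ g i = g (i + 1))
    (hinf : {i | T₁.tauStep (g i) (g (i + 1))}.Infinite) (hgR : ∀ i, R (g i) s₂) :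
    ∃ s₂', Relation.TransGen T₂.tauStep s₂ s₂' ∧ ∃ i, R (g i) s₂' := by
  obtain ⟨φ, hφ⟩ := exists_chain_of_infinite_steps hg hinf
  obtain ⟨s₂', htrans, k, h'⟩ := hR.div s₂ (g ∘ φ) hφ fun k => hgR (φ k)
  exact ⟨s₂', htrans, φ k, h'⟩

section Parallel

variable {C V B : Type} {C' : Set C}

lemma not_isComm_none : ¬ IsComm (V := V) (B := B) C' none := id

variable {T U : LTS (CAct C V B)}

lemma parLTS_optStep_left {s s' : T.State} {a : Option (CAct C V B)} (u : U.State)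
    (h : T.optStep s a s') (ha : ¬ IsComm C' a) : (parLTS C' T U).optStep (s, u) a (s', u) :=
  h.imp (fun h => ⟨ha, .inl ⟨h, rfl⟩⟩) fun ⟨ha, hs⟩ => ⟨ha, hs ▸ rfl⟩

lemma parLTS_optStep_right {u u' : U.State} {a : Option (CAct C V B)} (s : T.State)
    (h : U.optStep u a u') (ha : ¬ IsComm C' a) : (parLTS C' T U).optStep (s, u) a (s, u') :=
  h.imp (fun h => ⟨ha, .inr (.inl ⟨h, rfl⟩)⟩) fun ⟨ha, hu⟩ => ⟨ha, hu ▸ rfl⟩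

lemma parLTS_tauReach_left {s s' : T.State} (u : U.State) (h : T.tauReach s s') :
    (parLTS C' T U).tauReach (s, u) (s', u) :=
  h.lift (fun s => (s, u)) fun _ _ h => ⟨not_isComm_none, .inl ⟨h, rfl⟩⟩

lemma parLTS_tauReach_right {u u' : U.State} (s : T.State) (h : U.tauReach u u') :
    (parLTS C' T U).tauReach (s, u) (s, u') :=
  h.lift (fun u => (s, u)) fun _ _ h => ⟨not_isComm_none, .inr (.inl ⟨h, rfl⟩)⟩

lemma parLTS_transGen_left {s s' : T.State} (u : U.State)
    (h : Relation.TransGen T.tauStep s s') :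
    Relation.TransGen (parLTS C' T U).tauStep (s, u) (s', u) :=
  h.lift (fun s => (s, u)) fun _ _ h => ⟨not_isComm_none, .inl ⟨h, rfl⟩⟩

lemma parLTS_transGen_right {u u' : U.State} (s : T.State)
    (h : Relation.TransGen U.tauStep u u') :
    Relation.TransGen (parLTS C' T U).tauStep (s, u) (s, u') :=
  h.lift (fun u => (s, u)) fun _ _ h => ⟨not_isComm_none, .inr (.inl ⟨h, rfl⟩)⟩

variable {T₁ T₂ U₁ U₂ : LTS (CAct C V B)}
  {Rp : T₁.State → T₂.State → Prop} {Rq : U₁.State → U₂.State → Prop}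

lemma IsDPBranchingSim.exists_sync_of_labels (hp : IsDPBranchingSim T₁ T₂ Rp)
    (hq : IsDPBranchingSim U₁ U₂ Rq) {a b : CAct C V B}
    (hab : ∀ s s' u u', T₂.tr s (some a) s' → U₂.tr u (some b) u' →
      (parLTS C' T₂ U₂).tr (s, u) none (s', u'))
    {s₁ s₁' : T₁.State} {u₁ u₁' : U₁.State} {s₂ : T₂.State} {u₂ : U₂.State}
    (hRp : Rp s₁ s₂) (hRq : Rq u₁ u₂) (hs : T₁.tr s₁ (some a) s₁')
    (hu : U₁.tr u₁ (some b) u₁') :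
    ∃ x'' x', (parLTS C' T₂ U₂).tauReach (s₂, u₂) x'' ∧ (parLTS C' T₂ U₂).tr x'' none x' ∧
      (Rp s₁ x''.1 ∧ Rq u₁ x''.2) ∧ (Rp s₁' x'.1 ∧ Rq u₁' x'.2) := by
  obtain ⟨s₂'', s₂', hs_reach, hs_opt, hs'', hs'⟩ := hp.step _ _ _ _ hRp hs
  obtain ⟨u₂'', u₂', hu_reach, hu_opt, hu'', hu'⟩ := hq.step _ _ _ _ hRq hu
  exact ⟨(s₂'', u₂''), (s₂', u₂'),
    (parLTS_tauReach_left u₂ hs_reach).trans (parLTS_tauReach_right s₂'' hu_reach),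
    hab _ _ _ _ (optStep_some hs_opt) (optStep_some hu_opt), ⟨hs'', hu''⟩, ⟨hs', hu'⟩⟩

lemma IsDPBranchingSim.exists_sync (hp : IsDPBranchingSim T₁ T₂ Rp)
    (hq : IsDPBranchingSim U₁ U₂ Rq) {c : C} (hc : c ∈ C') {d : V}
    {s₁ s₁' : T₁.State} {u₁ u₁' : U₁.State} {s₂ : T₂.State} {u₂ : U₂.State}
    (hRp : Rp s₁ s₂) (hRq : Rq u₁ u₂)
    (hsync : (T₁.tr s₁ (some (.send c d)) s₁' ∧ U₁.tr u₁ (some (.recv c d)) u₁') ∨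
      (T₁.tr s₁ (some (.recv c d)) s₁' ∧ U₁.tr u₁ (some (.send c d)) u₁')) :
    ∃ x'' x', (parLTS C' T₂ U₂).tauReach (s₂, u₂) x'' ∧ (parLTS C' T₂ U₂).tr x'' none x' ∧
      (Rp s₁ x''.1 ∧ Rq u₁ x''.2) ∧ (Rp s₁' x'.1 ∧ Rq u₁' x'.2) := by
  rcases hsync with ⟨hs, hu⟩ | ⟨hs, hu⟩
  · exact hp.exists_sync_of_labels hq (fun _ _ _ _ hs hu =>
      ⟨not_isComm_none, .inr (.inr ⟨rfl, c, hc, d, .inl ⟨hs, hu⟩⟩)⟩) hRp hRq hs hu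
  · exact hp.exists_sync_of_labels hq (fun _ _ _ _ hs hu =>
      ⟨not_isComm_none, .inr (.inr ⟨rfl, c, hc, d, .inr ⟨hs, hu⟩⟩)⟩) hRp hRq hs hu

theorem IsDPBranchingSim.par (hp : IsDPBranchingSim T₁ T₂ Rp)
    (hq : IsDPBranchingSim U₁ U₂ Rq) :
    IsDPBranchingSim (parLTS C' T₁ U₁) (parLTS C' T₂ U₂) fun x y => Rp x.1 y.1 ∧ Rq x.2 y.2 where
  step := by
    rintro ⟨s₁, u₁⟩ ⟨s₂, u₂⟩ a ⟨s₁', u₁'⟩ ⟨hRp, hRq⟩ ⟨ha, hs | hu | ⟨rfl, c, hc, d, hsync⟩⟩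
    · obtain ⟨hs, rfl : u₁ = u₁'⟩ := hs
      obtain ⟨s₂'', s₂', hreach, hopt, h'', h'⟩ := hp.step _ _ a _ hRp hs
      exact ⟨(s₂'', u₂), (s₂', u₂), parLTS_tauReach_left u₂ hreach,
        parLTS_optStep_left u₂ hopt ha, ⟨h'', hRq⟩, ⟨h', hRq⟩⟩
    · obtain ⟨hu, rfl : s₁ = s₁'⟩ := hu
      obtain ⟨u₂'', u₂', hreach, hopt, h'', h'⟩ := hq.step _ _ a _ hRq hu
      exact ⟨(s₂, u₂''), (s₂, u₂'), parLTS_tauReach_right s₂ hreach,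
        parLTS_optStep_right s₂ hopt ha, ⟨hRp, h''⟩, ⟨hRp, h'⟩⟩
    · obtain ⟨x'', x', hreach, hstep, h'', h'⟩ := hp.exists_sync hq hc hRp hRq hsync
      exact ⟨x'', x', hreach, .inl hstep, h'', h'⟩
  final := by
    rintro ⟨s₁, u₁⟩ ⟨s₂, u₂⟩ ⟨hRp, hRq⟩ ⟨hs, hu⟩
    obtain ⟨s₂', hs_reach, hs', hs_fin⟩ := hp.final _ _ hRp hs
    obtain ⟨u₂', hu_reach, hu', hu_fin⟩ := hq.final _ _ hRq hu
    exact ⟨(s₂', u₂'), (parLTS_tauReach_left u₂ hs_reach).trans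
      (parLTS_tauReach_right s₂' hu_reach), ⟨hs', hu'⟩, hs_fin, hu_fin⟩
  div := by
    rintro ⟨s₂, u₂⟩ f hf hR
    by_cases hmoves : ∀ i, (T₁.tauStep (f i).1 (f (i + 1)).1 ∧ (f i).2 = (f (i + 1)).2) ∨
        (U₁.tauStep (f i).2 (f (i + 1)).2 ∧ (f i).1 = (f (i + 1)).1)
    · have hinf : {i | T₁.tauStep (f i).1 (f (i + 1)).1}.Infinite ∨
          {i | U₁.tauStep (f i).2 (f (i + 1)).2}.Infinite := by
        refine Set.infinite_union.mp (Set.infinite_univ.mono fun i _ => ?_)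
        exact (hmoves i).imp And.left And.left
      rcases hinf with hinf | hinf
      · obtain ⟨s₂', htrans, i, h'⟩ := hp.div_of_stutter
          (fun i => (hmoves i).imp And.left fun h => h.2) hinf fun i => (hR i).1
        exact ⟨(s₂', u₂), parLTS_transGen_left u₂ htrans, i, h', (hR i).2⟩
      · obtain ⟨u₂', htrans, i, h'⟩ := hq.div_of_stutter
          (fun i => (hmoves i).symm.imp And.left fun h => h.2) hinf fun i => (hR i).2
        exact ⟨(s₂, u₂'), parLTS_transGen_right s₂ htrans, i, (hR i).1, h'⟩
    · obtain ⟨i, hi⟩ := not_forall.mp hmoves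
      obtain ⟨-, hl | hr | ⟨-, c, hc, d, hsync⟩⟩ := hf i
      · exact absurd (.inl hl) hi
      · exact absurd (.inr hr) hi
      obtain ⟨x'', x', hreach, hstep, -, h'⟩ := hp.exists_sync hq hc (hR i).1 (hR i).2 hsync
      exact ⟨x', .tail' hreach hstep, i + 1, h'⟩

theorem DPBranchingBisimilar.par (hp : DPBranchingBisimilar T₁ T₂)
    (hq : DPBranchingBisimilar U₁ U₂) :
    DPBranchingBisimilar (parLTS C' T₁ U₁) (parLTS C' T₂ U₂) := by
  obtain ⟨Rp, hp₁, hp₂, hp₀⟩ := dpBranchingBisimilar_iff.mp hp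
  obtain ⟨Rq, hq₁, hq₂, hq₀⟩ := dpBranchingBisimilar_iff.mp hq
  exact dpBranchingBisimilar_iff.mpr ⟨_, hp₁.par hq₁, hp₂.par hq₂, hp₀, hq₀⟩

end Parallel

namespace PExp

variable {C V B N : Type}

def parLeft : PExp C V B N → PExp C V B N
  | .par _ p _ => p
  | p => p

def parRight : PExp C V B N → PExp C V B N
  | .par _ _ q => q
  | q => q

end PExp

section Semantics

variable {C V B N : Type} {E : N → Option (PExp C V B N)} {C' : Set C}

lemma term_par_iff {p q : PExp C V B N} : Term E (.par C' p q) ↔ Term E p ∧ Term E q :=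
  ⟨fun h => by cases h with | par hp hq => exact ⟨hp, hq⟩, fun ⟨hp, hq⟩ => .par hp hq⟩

lemma exists_eq_par_of_step_par {p q r : PExp C V B N} {a : Option (CAct C V B)}
    (h : Step E (.par C' p q) a r) : ∃ p' q', r = .par C' p' q' := by
  cases h <;> exact ⟨_, _, rfl⟩

lemma step_par_iff {p q p' q' : PExp C V B N} {a : Option (CAct C V B)} :
    Step E (.par C' p q) a (.par C' p' q') ↔ ¬ IsComm C' a ∧
      ((Step E p a p' ∧ q = q') ∨ (Step E q a q' ∧ p = p') ∨
       (a = none ∧ ∃ c ∈ C', ∃ d : V,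
         (Step E p (some (.send c d)) p' ∧ Step E q (some (.recv c d)) q') ∨
         (Step E p (some (.recv c d)) p' ∧ Step E q (some (.send c d)) q'))) := by
  constructor
  · intro h
    cases h with
    | parL h ha => exact ⟨ha, .inl ⟨h, rfl⟩⟩
    | parR h ha => exact ⟨ha, .inr (.inl ⟨h, rfl⟩)⟩
    | syncSR hc hp hq => exact ⟨not_isComm_none, .inr (.inr ⟨rfl, _, hc, _, .inl ⟨hp, hq⟩⟩)⟩
    | syncRS hc hp hq => exact ⟨not_isComm_none, .inr (.inr ⟨rfl, _, hc, _, .inr ⟨hp, hq⟩⟩)⟩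
  · rintro ⟨ha, ⟨h, rfl⟩ | ⟨h, rfl⟩ | ⟨rfl, c, hc, d, ⟨hp, hq⟩ | ⟨hp, hq⟩⟩⟩
    exacts [.parL h ha, .parR h ha, .syncSR hc hp hq, .syncRS hc hp hq]

lemma mem_reach_of_step {p r r' : PExp C V B N} {a : Option (CAct C V B)}
    (hr : r ∈ Reach E p) (h : Step E r a r') : r' ∈ Reach E p :=
  hr.tail ⟨a, h⟩

lemma exists_eq_par_of_mem_reach_par {p q r : PExp C V B N} (h : r ∈ Reach E (.par C' p q)) :
    ∃ p' ∈ Reach E p, ∃ q' ∈ Reach E q, r = .par C' p' q' := by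
  induction h with
  | refl => exact ⟨p, .refl, q, .refl, rfl⟩
  | tail _ hstep ih =>
    obtain ⟨p', hp', q', hq', rfl⟩ := ih
    obtain ⟨a, hstep⟩ := hstep
    obtain ⟨p'', q'', rfl⟩ := exists_eq_par_of_step_par hstep
    obtain ⟨-, ⟨h, rfl⟩ | ⟨h, rfl⟩ | ⟨-, c, -, d, ⟨h₁, h₂⟩ | ⟨h₁, h₂⟩⟩⟩ := step_par_iff.mp hstep
    exacts [⟨_, mem_reach_of_step hp' h, _, hq', rfl⟩, ⟨_, hp', _, mem_reach_of_step hq' h, rfl⟩,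
      ⟨_, mem_reach_of_step hp' h₁, _, mem_reach_of_step hq' h₂, rfl⟩,
      ⟨_, mem_reach_of_step hp' h₁, _, mem_reach_of_step hq' h₂, rfl⟩]

lemma parLeft_mem_reach {p q r : PExp C V B N} (h : r ∈ Reach E (.par C' p q)) :
    r.parLeft ∈ Reach E p := by
  obtain ⟨p', hp', q', -, rfl⟩ := exists_eq_par_of_mem_reach_par h
  exact hp'

lemma parRight_mem_reach {p q r : PExp C V B N} (h : r ∈ Reach E (.par C' p q)) :
    r.parRight ∈ Reach E q := by
  obtain ⟨p', -, q', hq', rfl⟩ := exists_eq_par_of_mem_reach_par h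
  exact hq'

def parSplit (E : N → Option (PExp C V B N)) (C' : Set C) (p q : PExp C V B N)
    (s : (pLTS E (.par C' p q)).State) : (parLTS C' (pLTS E p) (pLTS E q)).State :=
  (⟨s.1.parLeft, parLeft_mem_reach s.2⟩, ⟨s.1.parRight, parRight_mem_reach s.2⟩)

theorem isFunctionalBisimulation_parSplit (p q : PExp C V B N) :
    IsFunctionalBisimulation (pLTS E (.par C' p q)) (parLTS C' (pLTS E p) (pLTS E q))
      (parSplit E C' p q) where
  map_tr := by
    rintro ⟨r, hr⟩ a ⟨r', _⟩ h
    obtain ⟨p₀, -, q₀, -, rfl⟩ := exists_eq_par_of_mem_reach_par hr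
    obtain ⟨p', q', rfl⟩ := exists_eq_par_of_step_par h
    simpa only [parSplit, parLTS, pLTS, PExp.parLeft, PExp.parRight, Subtype.mk.injEq]
      using step_par_iff.mp h
  lift_tr := by
    rintro ⟨r, hr⟩ a ⟨⟨p', hp'⟩, ⟨q', hq'⟩⟩ h
    obtain ⟨p₀, -, q₀, -, rfl⟩ := exists_eq_par_of_mem_reach_par hr
    have hstep : Step E (.par C' p₀ q₀) a (.par C' p' q') := step_par_iff.mpr (by
      simpa only [parSplit, parLTS, pLTS, PExp.parLeft, PExp.parRight, Subtype.mk.injEq] using h)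
    exact ⟨⟨_, mem_reach_of_step hr hstep⟩, hstep, rfl⟩
  mem_final_iff := by
    rintro ⟨r, hr⟩
    obtain ⟨p₀, -, q₀, -, rfl⟩ := exists_eq_par_of_mem_reach_par hr
    exact term_par_iff.symm
  map_init := rfl

end Semantics

theorem dpbbisim_congruence_parallel_general
    {C V B N : Type} (E : N → Option (PExp C V B N))
    (p₁ p₂ q₁ q₂ : PExp C V B N)
    (C' : Set C)
    (hp : DPBranchingBisimilar (pLTS E p₁) (pLTS E p₂))
    (hq : DPBranchingBisimilar (pLTS E q₁) (pLTS E q₂)) :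
    DPBranchingBisimilar (pLTS E (.par C' p₁ q₁)) (pLTS E (.par C' p₂ q₂)) :=
  (hp.par hq).comap (isFunctionalBisimulation_parSplit p₁ q₁)
    (isFunctionalBisimulation_parSplit p₂ q₂)

/-- Divergence-preserving branching bisimilarity is a
congruence for the parallel composition operator of the process calculus. -/
theorem dpbbisim_congruence_parallel
    {C V B N : Type} (E : N → Option (PExp C V B N)) (hE : SpecWF E)
    (p₁ p₂ q₁ q₂ : PExp C V B N)
    (hp₁ : DefinedIn E p₁) (hp₂ : DefinedIn E p₂)
    (hq₁ : DefinedIn E q₁) (hq₂ : DefinedIn E q₂)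
    (C' : Set C)
    (hp : DPBranchingBisimilar (pLTS E p₁) (pLTS E p₂))
    (hq : DPBranchingBisimilar (pLTS E q₁) (pLTS E q₂)) :
    DPBranchingBisimilar (pLTS E (.par C' p₁ q₁)) (pLTS E (.par C' p₂ q₂)) :=
  dpbbisim_congruence_parallel_general E p₁ p₂ q₁ q₂ C' hp hq

end RTMPaper
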